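/- Let {x_k}, {Δ_k} be generated by the TRFD algorithm, assume each component F_i is convex, h is monotone, f has a global minimizer x* on Ω with D_0 := sup{‖x − x*‖_p : x ∈ Ω, f(x) ≤ f(x_0)} < ∞, and Δ_* ≥ D_0. If f(x_k) − f(x*) > Δ_* ε for k = 0,...,T−1, then (1/Δ_k)(f(x_k) − f(x*)) ≤ β for k = 0,...,T, where β := max{ (1/Δ_0)(f(x_0) − f(x*)), 2(L_J/σ + 1) Δ_* L_{h,p} L_J c_{p,2}(m) c_{2,p}(n)² / ((1−α)θ) }. -/

import Mathlib

/-!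
Along the run the iterates stay in `Ω`, `f = h ∘ F` never increases and `τ_k √n ≤ Δ_k ≤ Δ_*`.
On successful iterations and those of type I the radius does not shrink, so the scaled residual
`(f(x_k) - f(x*)) / Δ_k` does not grow. On iterations of type II or III the radius is halved.
There the failed ratio test forces the model error `h(F(x_k + d_k)) - h(F(x_k) + A_k d_k)`,
which is `O(L_J c² Δ_k²)` by the Lipschitz Jacobian and the `√n L_J τ_k / 2` finite-difference
error, to exceed `(1 - α)` times the predicted decrease; by convexity of `h` the latter is at
least `θ (Δ_k / Δ_*) (f(x_k) - m_k(Δ_*))`, where `m_k(r)` is the model minimum over radius `r`.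
Since `Δ_* ≥ D_0`, the step `x* - x_k` is admissible, and convexity of the `F_i` with
monotonicity of `h` gives `m_k(Δ_*) ≤ f(x*) + (L_J / σ) Δ_* ε / 2`, while `η ≥ ε / 2` gives
`f(x_k) - m_k(Δ_*) ≥ Δ_* ε / 2`. Hence `f(x_k) - f(x*) ≤ K Δ_k` with `2 K` the second entry of
the maximum, and after halving the scaled residual is at most `2 K`.
-/

open scoped ENNReal

noncomputable section

/-- The `p`-norm on `ℝ^n`, for `p ∈ [1,∞]`. -/
def pNorm (p : ℝ≥0∞) {n : ℕ} (x : Fin n → ℝ) : ℝ :=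
  if p = ∞ then ⨆ i, |x i| else (∑ i, |x i| ^ p.toReal) ^ (1 / p.toReal)

/-- The Euclidean norm on `ℝ^n`. -/
def eucNorm {n : ℕ} (x : Fin n → ℝ) : ℝ := Real.sqrt (∑ i, x i ^ 2)

/-- The operator norm of a matrix, induced by Euclidean norms. -/
def opNorm2 {m n : ℕ} (A : Matrix (Fin m) (Fin n) ℝ) : ℝ :=
  sSup ((fun v => eucNorm (A.mulVec v)) '' {v | eucNorm v ≤ 1})

/-- Forward finite-difference approximation of the Jacobian of `F` at `x` with stepsize `τ`:
the `j`-th column is `(F (x + τ e_j) - F x) / τ`. -/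
def fdMatrix {n m : ℕ} (F : (Fin n → ℝ) → (Fin m → ℝ)) (x : Fin n → ℝ) (τ : ℝ) :
    Matrix (Fin m) (Fin n) ℝ :=
  Matrix.of fun i j => (F (x + Pi.single j τ) i - F x i) / τ

/-- Stationarity measure `ψ_{p,r}(x)`. -/
def psi {n m : ℕ} (Ω : Set (Fin n → ℝ)) (F : (Fin n → ℝ) → (Fin m → ℝ))
    (h : (Fin m → ℝ) → ℝ) (J : (Fin n → ℝ) → Matrix (Fin m) (Fin n) ℝ)
    (p : ℝ≥0∞) (r : ℝ) (x : Fin n → ℝ) : ℝ :=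
  r⁻¹ * (h (F x) -
    sInf ((fun s => h (F x + (J x).mulVec s)) '' {s | x + s ∈ Ω ∧ pNorm p s ≤ r}))

/-- Approximate stationarity measure `η_{p,r}(x; A)`. -/
def eta {n m : ℕ} (Ω : Set (Fin n → ℝ)) (F : (Fin n → ℝ) → (Fin m → ℝ))
    (h : (Fin m → ℝ) → ℝ) (p : ℝ≥0∞) (r : ℝ) (x : Fin n → ℝ)
    (A : Matrix (Fin m) (Fin n) ℝ) : ℝ :=
  r⁻¹ * (h (F x) -
    sInf ((fun s => h (F x + A.mulVec s)) '' {s | x + s ∈ Ω ∧ pNorm p s ≤ r}))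

/-- The TRFD algorithm: `x`, `τ`, `Δ`, `A`, `d`, `ρ` are the iterates, finite-difference
stepsizes, trust-region radii, finite-difference Jacobian approximations, trial steps and
ratios generated by TRFD with parameters `ε, σ, α, θ, Δstar` from the point `x 0`. -/
def TRFDrun {n m : ℕ} (Ω : Set (Fin n → ℝ)) (F : (Fin n → ℝ) → (Fin m → ℝ))
    (h : (Fin m → ℝ) → ℝ) (p : ℝ≥0∞)
    (Lh cpm cnp ε σ α θ Δstar : ℝ)
    (x : ℕ → Fin n → ℝ) (τ Δ : ℕ → ℝ) (A : ℕ → Matrix (Fin m) (Fin n) ℝ)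
    (d : ℕ → Fin n → ℝ) (ρ : ℕ → ℝ) : Prop :=
  x 0 ∈ Ω ∧
  τ 0 = ε / (Lh * σ * cpm * cnp * Real.sqrt n) ∧
  τ 0 * Real.sqrt n ≤ Δ 0 ∧ Δ 0 ≤ Δstar ∧
  (∀ k, A k = fdMatrix F (x k) (τ k)) ∧
  (∀ k,
    -- unsuccessful iteration of type I
    (eta Ω F h p Δstar (x k) (A k) < ε / 2 ∧
      x (k + 1) = x k ∧ Δ (k + 1) = Δ k ∧ τ (k + 1) = τ k / 2) ∨
    (ε / 2 ≤ eta Ω F h p Δstar (x k) (A k) ∧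
      -- the trial step is feasible and achieves a `θ`-fraction of the optimal model decrease
      pNorm p (d k) ≤ Δ k ∧ x k + d k ∈ Ω ∧
      θ * (h (F (x k)) -
          sInf ((fun s => h (F (x k) + (A k).mulVec s)) ''
            {s | x k + s ∈ Ω ∧ pNorm p s ≤ Δ k})) ≤
        h (F (x k)) - h (F (x k) + (A k).mulVec (d k)) ∧
      ρ k = (h (F (x k)) - h (F (x k + d k))) /
            (h (F (x k)) - h (F (x k) + (A k).mulVec (d k))) ∧
      -- successful iteration
      ((α ≤ ρ k ∧ x (k + 1) = x k + d k ∧ Δ (k + 1) = min (2 * Δ k) Δstar ∧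
          τ (k + 1) = τ k) ∨
      -- unsuccessful iteration of type II
       (ρ k < α ∧ τ k * Real.sqrt n ≤ Δ k / 2 ∧
          x (k + 1) = x k ∧ Δ (k + 1) = Δ k / 2 ∧ τ (k + 1) = τ k) ∨
      -- unsuccessful iteration of type III
       (ρ k < α ∧ Δ k / 2 < τ k * Real.sqrt n ∧
          x (k + 1) = x k ∧ Δ (k + 1) = Δ k / 2 ∧ τ (k + 1) = τ k / 2))))

open scoped Matrix

section Norms

variable {k : ℕ}

theorem eucNorm_eq_norm (v : Fin k → ℝ) : eucNorm v = ‖WithLp.toLp 2 v‖ := by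
  simp [eucNorm, EuclideanSpace.norm_eq, sq_abs]

theorem eucNorm_nonneg (v : Fin k → ℝ) : 0 ≤ eucNorm v := Real.sqrt_nonneg _

theorem eucNorm_neg (v : Fin k → ℝ) : eucNorm (-v) = eucNorm v := by
  simp [eucNorm]

theorem eucNorm_smul (t : ℝ) (v : Fin k → ℝ) : eucNorm (t • v) = |t| * eucNorm v := by
  rw [eucNorm_eq_norm, eucNorm_eq_norm, WithLp.toLp_smul, norm_smul, Real.norm_eq_abs]

theorem eucNorm_sub_le_add (a b c : Fin k → ℝ) :
    eucNorm (a - c) ≤ eucNorm (a - b) + eucNorm (b - c) := by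
  simp only [eucNorm_eq_norm, WithLp.toLp_sub]
  exact norm_sub_le_norm_sub_add_norm_sub _ _ _

theorem eucNorm_single (j : Fin k) (t : ℝ) : eucNorm (Pi.single j t) = |t| := by
  rw [eucNorm, Finset.sum_eq_single j (fun i _ hi => by simp [hi]) (by simp)]
  simp [Real.sqrt_sq_eq_abs]

theorem pNorm_eq_norm {p : ℝ≥0∞} [Fact (1 ≤ p)] (v : Fin k → ℝ) :
    pNorm p v = ‖WithLp.toLp p v‖ := by
  unfold pNorm
  split_ifs with hp
  · subst hp
    simp [PiLp.norm_eq_ciSup]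
  · have hp0 : 0 < p.toReal := ENNReal.toReal_pos (zero_lt_one.trans_le Fact.out).ne' hp
    simp [PiLp.norm_eq_sum hp0]

theorem pNorm_zero {p : ℝ≥0∞} (hp : 1 ≤ p) : pNorm p (0 : Fin k → ℝ) = 0 := by
  have := Fact.mk hp
  simp [pNorm_eq_norm]

theorem pNorm_neg {p : ℝ≥0∞} (v : Fin k → ℝ) : pNorm p (-v) = pNorm p v := by
  simp [pNorm]

theorem pNorm_smul {p : ℝ≥0∞} (hp : 1 ≤ p) (t : ℝ) (v : Fin k → ℝ) :
    pNorm p (t • v) = |t| * pNorm p v := by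
  have := Fact.mk hp
  rw [pNorm_eq_norm, pNorm_eq_norm, WithLp.toLp_smul, norm_smul, Real.norm_eq_abs]

end Norms

section Matrices

variable {m n : ℕ}

theorem eucNorm_mulVec_le_sqrt_sum_sq (A : Matrix (Fin m) (Fin n) ℝ) (v : Fin n → ℝ) :
    eucNorm (A *ᵥ v) ≤ √(∑ i, ∑ j, A i j ^ 2) * eucNorm v := by
  rw [eucNorm, eucNorm, ← Real.sqrt_mul (by positivity), Finset.sum_mul]
  refine Real.sqrt_le_sqrt (Finset.sum_le_sum fun i _ => ?_)
  exact Finset.sum_mul_sq_le_sq_mul_sq Finset.univ (A i) v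

theorem eucNorm_mulVec_le_opNorm2 (A : Matrix (Fin m) (Fin n) ℝ) (v : Fin n → ℝ) :
    eucNorm (A *ᵥ v) ≤ opNorm2 A * eucNorm v := by
  have hbdd : BddAbove ((fun v => eucNorm (A *ᵥ v)) '' {v | eucNorm v ≤ 1}) := by
    refine ⟨√(∑ i, ∑ j, A i j ^ 2), ?_⟩
    rintro _ ⟨w, hw, rfl⟩
    exact (eucNorm_mulVec_le_sqrt_sum_sq A w).trans
      (mul_le_of_le_one_right (Real.sqrt_nonneg _) hw)
  rcases (eucNorm_nonneg v).eq_or_lt with hv | hv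
  · have : v = 0 := by simpa [eucNorm_eq_norm] using hv.symm
    simp [this, eucNorm]
  · have hunit : eucNorm ((eucNorm v)⁻¹ • v) ≤ 1 := by
      rw [eucNorm_smul, abs_inv, abs_of_pos hv, inv_mul_cancel₀ hv.ne']
    have := le_csSup hbdd ⟨_, hunit, rfl⟩
    simp only [Matrix.mulVec_smul, eucNorm_smul, abs_inv, abs_of_pos hv] at this
    rw [inv_mul_le_iff₀ hv] at this
    unfold opNorm2
    linarith

theorem eucNorm_mulVec_le_of_eucNorm_transpose_le {A : Matrix (Fin m) (Fin n) ℝ} {c : ℝ}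
    (hc0 : 0 ≤ c) (hc : ∀ j, eucNorm (Aᵀ j) ≤ c) (v : Fin n → ℝ) :
    eucNorm (A *ᵥ v) ≤ √n * c * eucNorm v := by
  have hcol : ∀ j, ∑ i, A i j ^ 2 ≤ c ^ 2 := fun j => by
    have := pow_le_pow_left₀ (eucNorm_nonneg _) (hc j) 2
    rwa [eucNorm, Real.sq_sqrt (by positivity)] at this
  have hsum : √(∑ i, ∑ j, A i j ^ 2) ≤ √n * c := by
    rw [← Real.sqrt_sq hc0, ← Real.sqrt_mul (Nat.cast_nonneg n), Finset.sum_comm]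
    refine Real.sqrt_le_sqrt ?_
    simpa using Finset.sum_le_sum (s := Finset.univ) fun j _ => hcol j
  exact (eucNorm_mulVec_le_sqrt_sum_sq A v).trans
    (mul_le_mul_of_nonneg_right hsum (eucNorm_nonneg v))

end Matrices

section Calculus

theorem norm_sub_sub_deriv_le_of_norm_deriv_sub_le {E : Type*} [NormedAddCommGroup E]
    [NormedSpace ℝ E] {φ φ' : ℝ → E} {K : ℝ} (hφ : ∀ t, HasDerivAt φ (φ' t) t)
    (hK : ∀ t ∈ Set.Ico (0 : ℝ) 1, ‖φ' t - φ' 0‖ ≤ K * t) :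
    ‖φ 1 - φ 0 - φ' 0‖ ≤ K / 2 := by
  have hg : ∀ t, HasDerivAt (fun s => φ s - φ 0 - s • φ' 0) (φ' t - φ' 0) t := fun t => by
    have := ((hφ t).sub_const (φ 0)).sub ((hasDerivAt_id t).smul_const (φ' 0))
    rwa [one_smul] at this
  have hB : ∀ t, HasDerivAt (fun s => K / 2 * s ^ 2) (K * t) t := fun t =>
    ((hasDerivAt_pow 2 t).const_mul (K / 2)).congr_deriv (by ring)
  have := image_norm_le_of_norm_deriv_right_le_deriv_boundary
    (fun t _ => (hg t).continuousAt.continuousWithinAt) (fun t _ => (hg t).hasDerivWithinAt)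
    (by simp) hB hK (Set.right_mem_Icc.mpr zero_le_one)
  simpa using this

variable {m n : ℕ} {F : (Fin n → ℝ) → (Fin m → ℝ)} {J : (Fin n → ℝ) → Matrix (Fin m) (Fin n) ℝ}

theorem hasDerivAt_comp_add_smul
    (hJ : ∀ y, HasFDerivAt F (LinearMap.toContinuousLinearMap (Matrix.mulVecLin (J y))) y)
    (y d : Fin n → ℝ) (t : ℝ) :
    HasDerivAt (fun s : ℝ => F (y + s • d)) (J (y + t • d) *ᵥ d) t := by
  have hline : HasDerivAt (fun s : ℝ => y + s • d) d t := by
    simpa using ((hasDerivAt_id t).smul_const d).const_add y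
  simpa [Function.comp_def] using (hJ (y + t • d)).comp_hasDerivAt t hline

theorem eucNorm_sub_sub_mulVec_le {LJ : ℝ}
    (hJ : ∀ y, HasFDerivAt F (LinearMap.toContinuousLinearMap (Matrix.mulVecLin (J y))) y)
    (hJLip : ∀ y z, opNorm2 (J y - J z) ≤ LJ * eucNorm (y - z)) (y d : Fin n → ℝ) :
    eucNorm (F (y + d) - F y - J y *ᵥ d) ≤ LJ / 2 * eucNorm d ^ 2 := by
  let e := (EuclideanSpace.equiv (Fin m) ℝ).symm
  have he : ∀ v, ‖e v‖ = eucNorm v := fun v => (eucNorm_eq_norm v).symm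
  have hφ : ∀ t, HasDerivAt (fun s : ℝ => e (F (y + s • d))) (e (J (y + t • d) *ᵥ d)) t :=
    fun t => e.hasFDerivAt.comp_hasDerivAt t (hasDerivAt_comp_add_smul hJ y d t)
  have hK : ∀ t ∈ Set.Ico (0 : ℝ) 1,
      ‖e (J (y + t • d) *ᵥ d) - e (J (y + (0 : ℝ) • d) *ᵥ d)‖ ≤ LJ * eucNorm d ^ 2 * t := by
    rintro t ⟨ht, -⟩
    rw [← map_sub, he, zero_smul, add_zero, ← Matrix.sub_mulVec]
    calc eucNorm ((J (y + t • d) - J y) *ᵥ d)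
        ≤ opNorm2 (J (y + t • d) - J y) * eucNorm d := eucNorm_mulVec_le_opNorm2 _ _
      _ ≤ LJ * eucNorm (y + t • d - y) * eucNorm d := by
        gcongr
        · exact eucNorm_nonneg d
        · exact hJLip _ _
      _ = LJ * eucNorm d ^ 2 * t := by
        rw [add_sub_cancel_left, eucNorm_smul, abs_of_nonneg ht]
        ring
  have := norm_sub_sub_deriv_le_of_norm_deriv_sub_le hφ hK
  rw [one_smul, zero_smul, add_zero, ← map_sub, ← map_sub, he] at this
  linarith

end Calculus

section FiniteDifferences

variable {m n : ℕ} {F : (Fin n → ℝ) → (Fin m → ℝ)}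

theorem fdMatrix_sub_transpose_apply (x : Fin n → ℝ) {τ : ℝ} (hτ : τ ≠ 0)
    (B : Matrix (Fin m) (Fin n) ℝ) (j : Fin n) :
    (fdMatrix F x τ - B)ᵀ j = τ⁻¹ • (F (x + Pi.single j τ) - F x - B *ᵥ Pi.single j τ) := by
  ext i
  simp only [fdMatrix, Matrix.transpose_apply, Matrix.sub_apply, Matrix.of_apply,
    Matrix.mulVec_single, op_smul_eq_smul, Pi.smul_apply, Pi.sub_apply, Matrix.col_apply,
    smul_eq_mul]
  field_simp

theorem eucNorm_fdMatrix_sub_mulVec_le {x : Fin n → ℝ} {B : Matrix (Fin m) (Fin n) ℝ}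
    {LJ τ : ℝ} (hLJ : 0 ≤ LJ) (hτ : 0 < τ)
    (hB : ∀ d, eucNorm (F (x + d) - F x - B *ᵥ d) ≤ LJ / 2 * eucNorm d ^ 2)
    (v : Fin n → ℝ) :
    eucNorm ((fdMatrix F x τ - B) *ᵥ v) ≤ √n * (LJ * τ / 2) * eucNorm v := by
  refine eucNorm_mulVec_le_of_eucNorm_transpose_le (by positivity) (fun j => ?_) v
  calc eucNorm ((fdMatrix F x τ - B)ᵀ j)
      = τ⁻¹ * eucNorm (F (x + Pi.single j τ) - F x - B *ᵥ Pi.single j τ) := by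
        rw [fdMatrix_sub_transpose_apply x hτ.ne', eucNorm_smul, abs_of_pos (inv_pos.mpr hτ)]
    _ ≤ τ⁻¹ * (LJ / 2 * τ ^ 2) := by
        gcongr
        simpa [eucNorm_single, abs_of_pos hτ] using hB (Pi.single j τ)
    _ = LJ * τ / 2 := by field_simp

end FiniteDifferences

theorem add_mulVec_sub_le_of_convexOn {m n : ℕ} {F : (Fin n → ℝ) → (Fin m → ℝ)}
    {J : (Fin n → ℝ) → Matrix (Fin m) (Fin n) ℝ}
    (hJ : ∀ y, HasFDerivAt F (LinearMap.toContinuousLinearMap (Matrix.mulVecLin (J y))) y)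
    (hFconv : ∀ i, ConvexOn ℝ Set.univ (fun y => F y i)) (y z : Fin n → ℝ) (i : Fin m) :
    (F y + J y *ᵥ (z - y)) i ≤ F z i := by
  let φ : ℝ → ℝ := fun s => F (y + s • (z - y)) i
  have hφ : ConvexOn ℝ Set.univ φ := by
    have := (hFconv i).comp_affineMap (AffineMap.lineMap y z)
    rw [Set.preimage_univ] at this
    suffices hφ : φ = (fun y => F y i) ∘ AffineMap.lineMap y z by rwa [hφ]
    ext s
    simp [φ, AffineMap.lineMap_apply_module', add_comm]
  have hφ' : HasDerivAt φ ((J y *ᵥ (z - y)) i) 0 := by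
    simpa using hasDerivAt_pi.mp (hasDerivAt_comp_add_smul hJ y (z - y) 0) i
  have := hφ.le_slope_of_hasDerivAt (Set.mem_univ 0) (Set.mem_univ 1) zero_lt_one hφ'
  rw [slope_def_field, sub_zero, div_one] at this
  simp only [φ, one_smul, zero_smul, add_zero, add_sub_cancel] at this
  simp only [Pi.add_apply]
  linarith

section TrustRegionModel

def modelValues {m n : ℕ} (Ω : Set (Fin n → ℝ)) (h : (Fin m → ℝ) → ℝ) (p : ℝ≥0∞)
    (x : Fin n → ℝ) (u : Fin m → ℝ) (A : Matrix (Fin m) (Fin n) ℝ) (r : ℝ) : Set ℝ :=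
  (fun s => h (u + A *ᵥ s)) '' {s | x + s ∈ Ω ∧ pNorm p s ≤ r}

/-- The minimum in `η_{p,r}(x; A)` when `u = F x`. As an `sInf` it is junk (`0`) unless the
model values are bounded below, hence the `BddBelow` hypotheses below. -/
def modelMin {m n : ℕ} (Ω : Set (Fin n → ℝ)) (h : (Fin m → ℝ) → ℝ) (p : ℝ≥0∞)
    (x : Fin n → ℝ) (u : Fin m → ℝ) (A : Matrix (Fin m) (Fin n) ℝ) (r : ℝ) : ℝ :=
  sInf (modelValues Ω h p x u A r)

variable {m n : ℕ} {Ω : Set (Fin n → ℝ)} {h : (Fin m → ℝ) → ℝ} {p : ℝ≥0∞}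
variable {x : Fin n → ℝ} {u : Fin m → ℝ} {A : Matrix (Fin m) (Fin n) ℝ} {r : ℝ}

theorem bddBelow_modelValues {L c : ℝ} (hL0 : 0 ≤ L)
    (hL : ∀ a b, h a - h b ≤ L * eucNorm (a - b)) (hc0 : 0 ≤ c)
    (hc : ∀ v : Fin n → ℝ, eucNorm v ≤ c * pNorm p v) (x : Fin n → ℝ) (u : Fin m → ℝ)
    (A : Matrix (Fin m) (Fin n) ℝ) (r : ℝ) :
    BddBelow (modelValues Ω h p x u A r) := by
  refine ⟨h u - L * (√(∑ i, ∑ j, A i j ^ 2) * (c * r)), ?_⟩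
  rintro _ ⟨s, ⟨-, hsr⟩, rfl⟩
  have hAs : eucNorm (A *ᵥ s) ≤ √(∑ i, ∑ j, A i j ^ 2) * (c * r) :=
    (eucNorm_mulVec_le_sqrt_sum_sq A s).trans
      (mul_le_mul_of_nonneg_left ((hc s).trans (mul_le_mul_of_nonneg_left hsr hc0))
        (Real.sqrt_nonneg _))
  have := hL u (u + A *ᵥ s)
  rw [sub_add_cancel_left, eucNorm_neg] at this
  nlinarith

theorem modelMin_le (hb : BddBelow (modelValues Ω h p x u A r)) {s : Fin n → ℝ}
    (hs : x + s ∈ Ω) (hsr : pNorm p s ≤ r) : modelMin Ω h p x u A r ≤ h (u + A *ᵥ s) :=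
  csInf_le hb ⟨s, ⟨hs, hsr⟩, rfl⟩

theorem modelMin_le_self (hp : 1 ≤ p) (hb : BddBelow (modelValues Ω h p x u A r))
    (hx : x ∈ Ω) (hr : 0 ≤ r) : modelMin Ω h p x u A r ≤ h u := by
  simpa using modelMin_le hb (s := 0) (by simpa using hx) (by rwa [pNorm_zero hp])

theorem div_mul_sub_modelMin_le (hp : 1 ≤ p) (hΩ : Convex ℝ Ω) (hh : ConvexOn ℝ Set.univ h)
    (hb : BddBelow (modelValues Ω h p x u A r)) (hx : x ∈ Ω) (hr : 0 < r) {R : ℝ}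
    (hrR : r ≤ R) :
    r / R * (h u - modelMin Ω h p x u A R) ≤ h u - modelMin Ω h p x u A r := by
  set t := r / R
  have ht0 : 0 < t := div_pos hr (hr.trans_le hrR)
  have ht1 : t ≤ 1 := div_le_one_of_le₀ hrR (hr.le.trans hrR)
  suffices hscaled : modelMin Ω h p x u A r ≤ (1 - t) * h u + t * modelMin Ω h p x u A R by
    linarith
  have hne : (modelValues Ω h p x u A R).Nonempty :=
    ⟨h u, 0, ⟨by simpa using hx, by rw [pNorm_zero hp]; exact hr.le.trans hrR⟩, by simp⟩
  rw [← sub_le_iff_le_add', ← div_le_iff₀' ht0]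
  refine le_csInf hne ?_
  rintro _ ⟨s, ⟨hs, hsR⟩, rfl⟩
  rw [div_le_iff₀' ht0, sub_le_iff_le_add']
  have hts : x + t • s ∈ Ω := by
    convert hΩ hx hs (sub_nonneg.mpr ht1) ht0.le (by ring) using 1
    module
  have htsr : pNorm p (t • s) ≤ r := by
    rw [pNorm_smul hp, abs_of_pos ht0]
    calc t * pNorm p s ≤ t * R := mul_le_mul_of_nonneg_left hsR ht0.le
      _ = r := div_mul_cancel₀ r (hr.trans_le hrR).ne'
  calc modelMin Ω h p x u A r ≤ h (u + A *ᵥ (t • s)) := modelMin_le hb hts htsr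
    _ = h ((1 - t) • u + t • (u + A *ᵥ s)) := by congr 1; rw [Matrix.mulVec_smul]; module
    _ ≤ (1 - t) • h u + t • h (u + A *ᵥ s) :=
        hh.2 (Set.mem_univ _) (Set.mem_univ _) (sub_nonneg.mpr ht1) ht0.le (by ring)
    _ = (1 - t) * h u + t * h (u + A *ᵥ s) := rfl

end TrustRegionModel

section ModelAccuracy

variable {m n : ℕ} {p : ℝ≥0∞} {F : (Fin n → ℝ) → (Fin m → ℝ)}
  {J : (Fin n → ℝ) → Matrix (Fin m) (Fin n) ℝ} {h : (Fin m → ℝ) → ℝ} {LJ L c τ : ℝ}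

theorem eucNorm_sub_fdModel_le
    (hJ : ∀ y, HasFDerivAt F (LinearMap.toContinuousLinearMap (Matrix.mulVecLin (J y))) y)
    (hJLip : ∀ y z, opNorm2 (J y - J z) ≤ LJ * eucNorm (y - z)) (hLJ : 0 ≤ LJ) (hτ : 0 < τ)
    (x d : Fin n → ℝ) :
    eucNorm (F (x + d) - (F x + fdMatrix F x τ *ᵥ d)) ≤
      LJ / 2 * eucNorm d ^ 2 + √n * (LJ * τ / 2) * eucNorm d := by
  have htri := eucNorm_sub_le_add (F (x + d)) (F x + J x *ᵥ d) (F x + fdMatrix F x τ *ᵥ d)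
  have hfd := eucNorm_fdMatrix_sub_mulVec_le hLJ hτ (eucNorm_sub_sub_mulVec_le hJ hJLip x) d
  rw [← eucNorm_neg, Matrix.sub_mulVec] at hfd
  rw [show F (x + d) - (F x + J x *ᵥ d) = F (x + d) - F x - J x *ᵥ d by abel,
    show F x + J x *ᵥ d - (F x + fdMatrix F x τ *ᵥ d) = -(fdMatrix F x τ *ᵥ d - J x *ᵥ d) by
      abel] at htri
  linarith [eucNorm_sub_sub_mulVec_le hJ hJLip x d]

theorem sub_fdModel_le
    (hJ : ∀ y, HasFDerivAt F (LinearMap.toContinuousLinearMap (Matrix.mulVecLin (J y))) y)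
    (hJLip : ∀ y z, opNorm2 (J y - J z) ≤ LJ * eucNorm (y - z)) (hLJ : 0 ≤ LJ)
    (hL0 : 0 ≤ L) (hL : ∀ a b, h a - h b ≤ L * eucNorm (a - b)) (hc1 : 1 ≤ c)
    (hc : ∀ v : Fin n → ℝ, eucNorm v ≤ c * pNorm p v) (hτ : 0 < τ) {Δ : ℝ}
    (hτΔ : τ * √n ≤ Δ) (x : Fin n → ℝ) {d : Fin n → ℝ} (hd : pNorm p d ≤ Δ) :
    h (F (x + d)) - h (F x + fdMatrix F x τ *ᵥ d) ≤ L * LJ * c ^ 2 * Δ ^ 2 := by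
  have hd' : eucNorm d ≤ c * Δ := (hc d).trans (mul_le_mul_of_nonneg_left hd (by linarith))
  have hΔ : 0 ≤ Δ := (mul_nonneg hτ.le (Real.sqrt_nonneg n)).trans hτΔ
  have herr : eucNorm (F (x + d) - (F x + fdMatrix F x τ *ᵥ d)) ≤ LJ * c ^ 2 * Δ ^ 2 :=
    calc _ ≤ LJ / 2 * eucNorm d ^ 2 + √n * (LJ * τ / 2) * eucNorm d :=
          eucNorm_sub_fdModel_le hJ hJLip hLJ hτ x d
      _ ≤ LJ / 2 * (c * Δ) ^ 2 + Δ * (LJ / 2) * (c * Δ) := by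
          have : √n * (LJ * τ / 2) ≤ Δ * (LJ / 2) := by nlinarith
          exact add_le_add
            (mul_le_mul_of_nonneg_left (pow_le_pow_left₀ (eucNorm_nonneg d) hd' 2) (by positivity))
            (mul_le_mul this hd' (eucNorm_nonneg d) (by positivity))
      _ ≤ LJ * c ^ 2 * Δ ^ 2 := by
          nlinarith [mul_nonneg (mul_nonneg hLJ (sq_nonneg Δ)) (show 0 ≤ c ^ 2 - c by nlinarith)]
  calc _ ≤ L * eucNorm (F (x + d) - (F x + fdMatrix F x τ *ᵥ d)) := hL _ _
    _ ≤ L * (LJ * c ^ 2 * Δ ^ 2) := mul_le_mul_of_nonneg_left herr hL0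
    _ = L * LJ * c ^ 2 * Δ ^ 2 := by ring

theorem modelMin_fdMatrix_le
    (hJ : ∀ y, HasFDerivAt F (LinearMap.toContinuousLinearMap (Matrix.mulVecLin (J y))) y)
    (hJLip : ∀ y z, opNorm2 (J y - J z) ≤ LJ * eucNorm (y - z)) (hLJ : 0 ≤ LJ)
    (hFconv : ∀ i, ConvexOn ℝ Set.univ (fun y => F y i))
    (hmono : ∀ u v : Fin m → ℝ, (∀ i, u i ≤ v i) → h u ≤ h v)
    (hL0 : 0 ≤ L) (hL : ∀ a b, h a - h b ≤ L * eucNorm (a - b)) (hc0 : 0 ≤ c)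
    (hc : ∀ v : Fin n → ℝ, eucNorm v ≤ c * pNorm p v) (hτ : 0 < τ) {Ω : Set (Fin n → ℝ)}
    {x z : Fin n → ℝ} {r : ℝ}
    (hb : BddBelow (modelValues Ω h p x (F x) (fdMatrix F x τ) r))
    (hz : z ∈ Ω) (hzr : pNorm p (z - x) ≤ r) :
    modelMin Ω h p x (F x) (fdMatrix F x τ) r ≤ h (F z) + L * (√n * (LJ * τ / 2)) * (c * r) := by
  have hfd := eucNorm_fdMatrix_sub_mulVec_le hLJ hτ (eucNorm_sub_sub_mulVec_le hJ hJLip x) (z - x)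
  have hzx : eucNorm (z - x) ≤ c * r := (hc _).trans (mul_le_mul_of_nonneg_left hzr hc0)
  calc modelMin Ω h p x (F x) (fdMatrix F x τ) r
      ≤ h (F x + fdMatrix F x τ *ᵥ (z - x)) := modelMin_le hb (by simpa using hz) hzr
    _ ≤ h (F x + J x *ᵥ (z - x)) + L * eucNorm ((fdMatrix F x τ - J x) *ᵥ (z - x)) := by
        have := hL (F x + fdMatrix F x τ *ᵥ (z - x)) (F x + J x *ᵥ (z - x))
        rw [Matrix.sub_mulVec]
        rw [add_sub_add_left_eq_sub] at this
        linarith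
    _ ≤ h (F z) + L * (√n * (LJ * τ / 2) * (c * r)) := by
        gcongr
        · exact hmono _ _ (add_mulVec_sub_le_of_convexOn hJ hFconv x z)
        · exact hfd.trans (by gcongr)
    _ = h (F z) + L * (√n * (LJ * τ / 2)) * (c * r) := by ring

end ModelAccuracy

theorem residual_le_of_ratio_lt {f fstar fnext fmodel Mstar MΔ Δ Δstar ε α θ c G : ℝ}
    (hΔ : 0 < Δ) (hΔstar : Δ ≤ Δstar) (hε : 0 < ε) (hα1 : α < 1) (hθ0 : 0 < θ) (hc : 0 ≤ c)
    (hη : ε / 2 ≤ Δstar⁻¹ * (f - Mstar)) (hscale : Δ / Δstar * (f - Mstar) ≤ f - MΔ)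
    (hfrac : θ * (f - MΔ) ≤ f - fmodel) (hρ : (f - fnext) / (f - fmodel) < α)
    (hgap : fnext - fmodel ≤ G * Δ ^ 2) (hopt : Mstar ≤ fstar + c * (Δstar * ε / 2)) :
    f - fstar ≤ (c + 1) * Δstar * G / ((1 - α) * θ) * Δ := by
  have hΔs : 0 < Δstar := hΔ.trans_le hΔstar
  have hW : Δstar * (ε / 2) ≤ f - Mstar := (le_inv_mul_iff₀ hΔs).mp hη
  have hpred : θ * Δ * (f - Mstar) ≤ Δstar * (f - fmodel) := by
    have := mul_le_mul_of_nonneg_left (hfrac.trans' (mul_le_mul_of_nonneg_left hscale hθ0.le))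
      hΔs.le
    rwa [show Δstar * (θ * (Δ / Δstar * (f - Mstar))) = θ * Δ * (f - Mstar) by field_simp]
      at this
  have hpred0 : 0 < f - fmodel := by
    have : 0 < θ * Δ * (f - Mstar) := mul_pos (mul_pos hθ0 hΔ) (by nlinarith [mul_pos hΔs hε])
    nlinarith
  have hared : f - fnext < α * (f - fmodel) := (div_lt_iff₀ hpred0).mp hρ
  -- the failed ratio test makes the model error `fnext - fmodel` exceed `(1 - α) (f - fmodel)`
  have hmodel : (1 - α) * θ * (f - Mstar) ≤ Δstar * G * Δ := by
    have : (1 - α) * (θ * Δ * (f - Mstar)) ≤ Δstar * (G * Δ ^ 2) := by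
      nlinarith [mul_le_mul_of_nonneg_left hpred (sub_nonneg.mpr hα1.le)]
    nlinarith
  have hWle : f - Mstar ≤ Δstar * G * Δ / ((1 - α) * θ) := by
    rw [le_div_iff₀ (by nlinarith)]
    linarith
  calc f - fstar ≤ (f - Mstar) + c * (f - Mstar) := by nlinarith
    _ = (c + 1) * (f - Mstar) := by ring
    _ ≤ (c + 1) * (Δstar * G * Δ / ((1 - α) * θ)) := by gcongr
    _ = (c + 1) * Δstar * G / ((1 - α) * θ) * Δ := by ring

namespace TRFDrun

variable {n m : ℕ} {Ω : Set (Fin n → ℝ)} {F : (Fin n → ℝ) → (Fin m → ℝ)}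
  {h : (Fin m → ℝ) → ℝ} {p : ℝ≥0∞} {Lh cpm cnp ε σ α θ Δstar : ℝ}
  {x : ℕ → Fin n → ℝ} {τ Δ : ℕ → ℝ} {A : ℕ → Matrix (Fin m) (Fin n) ℝ}
  {d : ℕ → Fin n → ℝ} {ρ : ℕ → ℝ}

theorem invariants (hrun : TRFDrun Ω F h p Lh cpm cnp ε σ α θ Δstar x τ Δ A d ρ)
    (hn : 1 ≤ n) (hτ0 : 0 < τ 0) (k : ℕ) :
    x k ∈ Ω ∧ 0 < τ k ∧ τ k ≤ τ 0 ∧ 0 < Δ k ∧ Δ k ≤ Δstar ∧ τ k * √n ≤ Δ k := by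
  obtain ⟨hx0, -, hτΔ0, hΔ0, -, hstep⟩ := hrun
  have hsqrt : 0 < √(n : ℝ) := Real.sqrt_pos.mpr (by exact_mod_cast hn)
  induction k with
  | zero => exact ⟨hx0, hτ0, le_rfl, (mul_pos hτ0 hsqrt).trans_le hτΔ0, hΔ0, hτΔ0⟩
  | succ k ih =>
    obtain ⟨hxk, hτk, hττ0, hΔk, hΔstar, hτΔ⟩ := ih
    have hτsqrt : 0 < τ k * √n := mul_pos hτk hsqrt
    rcases hstep k with ⟨-, hx, hΔ, hτ⟩ | ⟨-, -, hdΩ, -, -, ⟨-, hx, hΔ, hτ⟩ |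
        ⟨-, hτΔ', hx, hΔ, hτ⟩ | ⟨-, hτΔ', hx, hΔ, hτ⟩⟩ <;> rw [hx, hΔ, hτ]
    · exact ⟨hxk, by linarith, by linarith, hΔk, hΔstar, by linarith⟩
    · refine ⟨hdΩ, hτk, hττ0, lt_min (by linarith) (by linarith), min_le_right _ _,
        le_min (by linarith) (by linarith)⟩
    · exact ⟨hxk, hτk, hττ0, by linarith, by linarith, hτΔ'⟩
    · exact ⟨hxk, by linarith, by linarith, by linarith, by linarith, by linarith⟩

theorem objective_succ_le (hrun : TRFDrun Ω F h p Lh cpm cnp ε σ α θ Δstar x τ Δ A d ρ)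
    (hp : 1 ≤ p) (hb : ∀ x u A r, BddBelow (modelValues Ω h p x u A r)) (hα0 : 0 < α)
    (hθ0 : 0 < θ) {k : ℕ} (hxk : x k ∈ Ω) (hΔk : 0 ≤ Δ k) :
    h (F (x (k + 1))) ≤ h (F (x k)) := by
  rcases hrun.2.2.2.2.2 k with ⟨-, hx, -⟩ | ⟨-, -, -, hfrac, hρ, ⟨hρα, hx, -⟩ | ⟨-, -, hx, -⟩ |
      ⟨-, -, hx, -⟩⟩ <;> rw [hx]
  have hpred : 0 ≤ h (F (x k)) - h (F (x k) + A k *ᵥ d k) :=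
    (mul_nonneg hθ0.le (sub_nonneg.mpr (modelMin_le_self hp (hb _ _ _ _) hxk hΔk))).trans hfrac
  rw [hρ] at hρα
  rcases div_pos_iff.mp (hα0.trans_le hρα) with ⟨hared, -⟩ | ⟨-, hneg⟩
  · linarith
  · linarith

theorem objective_le_initial (hrun : TRFDrun Ω F h p Lh cpm cnp ε σ α θ Δstar x τ Δ A d ρ)
    (hn : 1 ≤ n) (hτ0 : 0 < τ 0) (hp : 1 ≤ p)
    (hb : ∀ x u A r, BddBelow (modelValues Ω h p x u A r)) (hα0 : 0 < α) (hθ0 : 0 < θ)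
    (k : ℕ) : h (F (x k)) ≤ h (F (x 0)) :=
  antitone_nat_of_succ_le (f := fun k => h (F (x k))) (fun k => hrun.objective_succ_le hp hb hα0 hθ0
    (hrun.invariants hn hτ0 k).1 (hrun.invariants hn hτ0 k).2.2.2.1.le) (Nat.zero_le k)

theorem residual_le_of_unsuccessful {J : (Fin n → ℝ) → Matrix (Fin m) (Fin n) ℝ} {LJ : ℝ}
    (hrun : TRFDrun Ω F h p Lh cpm cnp ε σ α θ Δstar x τ Δ A d ρ) (hn : 1 ≤ n) (hp : 1 ≤ p)
    (hΩ : Convex ℝ Ω)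
    (hJ : ∀ y, HasFDerivAt F (LinearMap.toContinuousLinearMap (Matrix.mulVecLin (J y))) y)
    (hLJ : 0 ≤ LJ) (hJLip : ∀ y z, opNorm2 (J y - J z) ≤ LJ * eucNorm (y - z))
    (hh : ConvexOn ℝ Set.univ h) (hLh : 0 < Lh)
    (hL : ∀ a b, h a - h b ≤ Lh * cpm * eucNorm (a - b)) (hcnp1 : 1 ≤ cnp) (hcpm1 : 1 ≤ cpm)
    (hcnp : ∀ v : Fin n → ℝ, eucNorm v ≤ cnp * pNorm p v) (hε : 0 < ε) (hσ : 0 < σ)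
    (hα1 : α < 1) (hθ0 : 0 < θ) (hFconv : ∀ i, ConvexOn ℝ Set.univ (fun y => F y i))
    (hmono : ∀ u v : Fin m → ℝ, (∀ i, u i ≤ v i) → h u ≤ h v)
    (hb : ∀ x u A r, BddBelow (modelValues Ω h p x u A r)) {k : ℕ}
    (hinv : x k ∈ Ω ∧ 0 < τ k ∧ τ k ≤ τ 0 ∧ 0 < Δ k ∧ Δ k ≤ Δstar ∧ τ k * √n ≤ Δ k)
    {xstar : Fin n → ℝ} (hxstar : xstar ∈ Ω) (hxstar_near : pNorm p (xstar - x k) ≤ Δstar)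
    (hη : ε / 2 ≤ eta Ω F h p Δstar (x k) (A k)) (hd : pNorm p (d k) ≤ Δ k)
    (hfrac : θ * (h (F (x k)) - modelMin Ω h p (x k) (F (x k)) (A k) (Δ k)) ≤
      h (F (x k)) - h (F (x k) + A k *ᵥ d k))
    (hρ : ρ k = (h (F (x k)) - h (F (x k + d k))) / (h (F (x k)) - h (F (x k) + A k *ᵥ d k)))
    (hρα : ρ k < α) :
    h (F (x k)) - h (F xstar) ≤
      (LJ / σ + 1) * Δstar * Lh * LJ * cpm * cnp ^ 2 / ((1 - α) * θ) * Δ k := by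
  obtain ⟨hxk, hτk, hττ0, hΔk, hΔstar, hτΔ⟩ := hinv
  have hA : A k = fdMatrix F (x k) (τ k) := hrun.2.2.2.2.1 k
  have hL0 : 0 ≤ Lh * cpm := by positivity
  have hτε : τ k * √n * (Lh * σ * cpm * cnp) ≤ ε := by
    have hsqrt : 0 < √(n : ℝ) := Real.sqrt_pos.mpr (by exact_mod_cast hn)
    have := mul_le_mul_of_nonneg_right hττ0 hsqrt.le
    rw [hrun.2.1, div_mul_eq_mul_div, mul_div_mul_right _ _ hsqrt.ne'] at this
    rwa [← le_div_iff₀ (by positivity)]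
  have hopt : modelMin Ω h p (x k) (F (x k)) (A k) Δstar ≤
      h (F xstar) + LJ / σ * (Δstar * ε / 2) := by
    rw [hA]
    refine (modelMin_fdMatrix_le hJ hJLip hLJ hFconv hmono hL0 hL (by linarith) hcnp hτk
      (hb _ _ _ _) hxstar hxstar_near).trans ?_
    rw [add_le_add_iff_left, div_mul_eq_mul_div, le_div_iff₀ hσ]
    have hΔs : 0 ≤ Δstar := hΔk.le.trans hΔstar
    nlinarith [mul_le_mul_of_nonneg_left hτε (by positivity : 0 ≤ LJ * Δstar / 2)]
  have hgap := sub_fdModel_le hJ hJLip hLJ hL0 hL hcnp1 hcnp hτk hτΔ (x k) hd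
  rw [← hA] at hgap
  have := residual_le_of_ratio_lt hΔk hΔstar hε hα1 hθ0 (by positivity) hη
    (div_mul_sub_modelMin_le hp hΩ hh (hb _ _ _ _) hxk hΔk hΔstar) hfrac (hρ ▸ hρα) hgap hopt
  convert this using 2
  ring

theorem scaledResidual_succ_le {J : (Fin n → ℝ) → Matrix (Fin m) (Fin n) ℝ} {LJ : ℝ}
    (hrun : TRFDrun Ω F h p Lh cpm cnp ε σ α θ Δstar x τ Δ A d ρ) (hn : 1 ≤ n) (hp : 1 ≤ p)
    (hΩ : Convex ℝ Ω)
    (hJ : ∀ y, HasFDerivAt F (LinearMap.toContinuousLinearMap (Matrix.mulVecLin (J y))) y)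
    (hLJ : 0 ≤ LJ) (hJLip : ∀ y z, opNorm2 (J y - J z) ≤ LJ * eucNorm (y - z))
    (hh : ConvexOn ℝ Set.univ h) (hLh : 0 < Lh)
    (hL : ∀ a b, h a - h b ≤ Lh * cpm * eucNorm (a - b)) (hcnp1 : 1 ≤ cnp) (hcpm1 : 1 ≤ cpm)
    (hcnp : ∀ v : Fin n → ℝ, eucNorm v ≤ cnp * pNorm p v) (hε : 0 < ε) (hσ : 0 < σ)
    (hα0 : 0 < α) (hα1 : α < 1) (hθ0 : 0 < θ)
    (hFconv : ∀ i, ConvexOn ℝ Set.univ (fun y => F y i))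
    (hmono : ∀ u v : Fin m → ℝ, (∀ i, u i ≤ v i) → h u ≤ h v)
    (hb : ∀ x u A r, BddBelow (modelValues Ω h p x u A r)) (hτ0 : 0 < τ 0)
    {xstar : Fin n → ℝ} (hxstar : xstar ∈ Ω) (hxstar_min : ∀ y ∈ Ω, h (F xstar) ≤ h (F y))
    {k : ℕ} (hxstar_near : pNorm p (xstar - x k) ≤ Δstar) :
    (Δ (k + 1))⁻¹ * (h (F (x (k + 1))) - h (F xstar)) ≤
      max ((Δ k)⁻¹ * (h (F (x k)) - h (F xstar)))
        (2 * (LJ / σ + 1) * Δstar * Lh * LJ * cpm * cnp ^ 2 / ((1 - α) * θ)) := by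
  obtain ⟨hxk, -, -, hΔk, hΔstar, -⟩ := hrun.invariants hn hτ0 k
  have hgrow (hΔ : Δ k ≤ Δ (k + 1)) :
      (Δ (k + 1))⁻¹ * (h (F (x (k + 1))) - h (F xstar)) ≤
        (Δ k)⁻¹ * (h (F (x k)) - h (F xstar)) :=
    mul_le_mul (inv_anti₀ hΔk hΔ)
      (by linarith [hrun.objective_succ_le hp hb hα0 hθ0 hxk hΔk.le])
      (sub_nonneg.mpr (hxstar_min _ (hrun.invariants hn hτ0 (k + 1)).1))
      (inv_nonneg.mpr hΔk.le)
  rcases hrun.2.2.2.2.2 k with ⟨-, -, hΔ, -⟩ | ⟨hη, hd, -, hfrac, hρ, ⟨-, -, hΔ, -⟩ |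
      ⟨hρα, -, hx, hΔ, -⟩ | ⟨hρα, -, hx, hΔ, -⟩⟩
  · exact le_max_of_le_left (hgrow hΔ.ge)
  · exact le_max_of_le_left (hgrow (hΔ ▸ le_min (by linarith) hΔstar))
  all_goals
    have := hrun.residual_le_of_unsuccessful hn hp hΩ hJ hLJ hJLip hh hLh hL hcnp1 hcpm1 hcnp
      hε hσ hα1 hθ0 hFconv hmono hb (hrun.invariants hn hτ0 k) hxstar hxstar_near hη hd hfrac hρ hρα
    refine le_max_of_le_right ?_
    rw [hx, hΔ, inv_div, div_mul_eq_mul_div, div_le_iff₀ hΔk]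
    linear_combination 2 * this

end TRFDrun

theorem stmt16_general
    {n m : ℕ} (hn : 1 ≤ n) (p : ℝ≥0∞) (hp : 1 ≤ p)
    (Ω : Set (Fin n → ℝ)) (hΩcv : Convex ℝ Ω)
    (F : (Fin n → ℝ) → (Fin m → ℝ)) (J : (Fin n → ℝ) → Matrix (Fin m) (Fin n) ℝ)
    (hJ : ∀ y, HasFDerivAt F (LinearMap.toContinuousLinearMap (Matrix.mulVecLin (J y))) y)
    (LJ : ℝ) (hLJ : 0 < LJ)
    (hJLip : ∀ y z, opNorm2 (J y - J z) ≤ LJ * eucNorm (y - z))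
    (h : (Fin m → ℝ) → ℝ) (hconv : ConvexOn ℝ Set.univ h)
    (Lh : ℝ) (hLh : 0 < Lh)
    (hhLip : ∀ z w, |h z - h w| ≤ Lh * pNorm p (z - w))
    (cnp cpm : ℝ) (hcnp1 : 1 ≤ cnp) (hcpm1 : 1 ≤ cpm)
    (hcnp : ∀ v : Fin n → ℝ, eucNorm v ≤ cnp * pNorm p v)
    (hcpm : ∀ z : Fin m → ℝ, pNorm p z ≤ cpm * eucNorm z)
    (ε σ α θ Δstar : ℝ) (hε : 0 < ε) (hσ : 0 < σ)
    (hα0 : 0 < α) (hα1 : α < 1) (hθ0 : 0 < θ)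
    (x : ℕ → Fin n → ℝ) (τ Δ : ℕ → ℝ) (A : ℕ → Matrix (Fin m) (Fin n) ℝ)
    (d : ℕ → Fin n → ℝ) (ρ : ℕ → ℝ)
    (hrun : TRFDrun Ω F h p Lh cpm cnp ε σ α θ Δstar x τ Δ A d ρ)
    (hFconv : ∀ i, ConvexOn ℝ Set.univ (fun y => F y i))
    (hmono : ∀ u v : Fin m → ℝ, (∀ i, u i ≤ v i) → h u ≤ h v)
    (xstar : Fin n → ℝ) (hxstarΩ : xstar ∈ Ω)
    (hxstarmin : ∀ y ∈ Ω, h (F xstar) ≤ h (F y))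
    (D₀ : ℝ) (hD₀ : ∀ y ∈ Ω, h (F y) ≤ h (F (x 0)) → pNorm p (y - xstar) ≤ D₀)
    (hΔstarD₀ : D₀ ≤ Δstar)
    (T : ℕ) :
    ∀ k ≤ T, (Δ k)⁻¹ * (h (F (x k)) - h (F xstar)) ≤
      max ((Δ 0)⁻¹ * (h (F (x 0)) - h (F xstar)))
        (2 * (LJ / σ + 1) * Δstar * Lh * LJ * cpm * cnp ^ 2 / ((1 - α) * θ)) := by
  have hL : ∀ a b, h a - h b ≤ Lh * cpm * eucNorm (a - b) := fun a b =>
    (le_abs_self _).trans <| (hhLip a b).trans <| by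
      rw [mul_assoc]; exact mul_le_mul_of_nonneg_left (hcpm _) hLh.le
  have hb := bddBelow_modelValues (Ω := Ω) (p := p) (by positivity) hL (by linarith) hcnp
  have hτ0 : 0 < τ 0 := by rw [hrun.2.1]; positivity
  have hxstar_near (k : ℕ) : pNorm p (xstar - x k) ≤ Δstar := by
    rw [← pNorm_neg, neg_sub]
    exact (hD₀ _ (hrun.invariants hn hτ0 k).1
      (hrun.objective_le_initial hn hτ0 hp hb hα0 hθ0 k)).trans hΔstarD₀
  intro k hk
  induction k with
  | zero => exact le_max_left _ _
  | succ k ih =>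
    refine (hrun.scaledResidual_succ_le hn hp hΩcv hJ hLJ.le hJLip hconv hLh hL hcnp1 hcpm1 hcnp
      hε hσ hα0 hα1 hθ0 hFconv hmono hb hτ0 hxstarΩ hxstarmin (hxstar_near k)).trans ?_
    exact max_le (ih (Nat.le_of_succ_le hk)) (le_max_right _ _)

/-- Lemma 3.11: bound on the scaled functional residual. -/
theorem stmt16
    {n m : ℕ} (hn : 1 ≤ n) (hm : 1 ≤ m) (p : ℝ≥0∞) (hp : 1 ≤ p)
    (Ω : Set (Fin n → ℝ)) (hΩne : Ω.Nonempty) (hΩcl : IsClosed Ω) (hΩcv : Convex ℝ Ω)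
    (F : (Fin n → ℝ) → (Fin m → ℝ)) (J : (Fin n → ℝ) → Matrix (Fin m) (Fin n) ℝ)
    (hJ : ∀ y, HasFDerivAt F (LinearMap.toContinuousLinearMap (Matrix.mulVecLin (J y))) y)
    (LJ : ℝ) (hLJ : 0 < LJ)
    (hJLip : ∀ y z, opNorm2 (J y - J z) ≤ LJ * eucNorm (y - z))
    (h : (Fin m → ℝ) → ℝ) (hconv : ConvexOn ℝ Set.univ h)
    (Lh : ℝ) (hLh : 0 < Lh)
    (hhLip : ∀ z w, |h z - h w| ≤ Lh * pNorm p (z - w))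
    (cnp cpm : ℝ) (hcnp1 : 1 ≤ cnp) (hcpm1 : 1 ≤ cpm)
    (hcnp : ∀ v : Fin n → ℝ, eucNorm v ≤ cnp * pNorm p v)
    (hcpm : ∀ z : Fin m → ℝ, pNorm p z ≤ cpm * eucNorm z)
    (ε σ α θ Δstar : ℝ) (hε : 0 < ε) (hσ : 0 < σ)
    (hα0 : 0 < α) (hα1 : α < 1) (hθ0 : 0 < θ) (hθ1 : θ ≤ 1)
    (x : ℕ → Fin n → ℝ) (τ Δ : ℕ → ℝ) (A : ℕ → Matrix (Fin m) (Fin n) ℝ)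
    (d : ℕ → Fin n → ℝ) (ρ : ℕ → ℝ)
    (hrun : TRFDrun Ω F h p Lh cpm cnp ε σ α θ Δstar x τ Δ A d ρ)
    (hFconv : ∀ i, ConvexOn ℝ Set.univ (fun y => F y i))
    (hmono : ∀ u v : Fin m → ℝ, (∀ i, u i ≤ v i) → h u ≤ h v)
    (xstar : Fin n → ℝ) (hxstarΩ : xstar ∈ Ω)
    (hxstarmin : ∀ y ∈ Ω, h (F xstar) ≤ h (F y))
    (D₀ : ℝ) (hD₀ : ∀ y ∈ Ω, h (F y) ≤ h (F (x 0)) → pNorm p (y - xstar) ≤ D₀)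
    (hΔstarD₀ : D₀ ≤ Δstar)
    (T : ℕ) (hT : ∀ k < T, Δstar * ε < h (F (x k)) - h (F xstar)) :
    ∀ k ≤ T, (Δ k)⁻¹ * (h (F (x k)) - h (F xstar)) ≤
      max ((Δ 0)⁻¹ * (h (F (x 0)) - h (F xstar)))
        (2 * (LJ / σ + 1) * Δstar * Lh * LJ * cpm * cnp ^ 2 / ((1 - α) * θ)) :=
  stmt16_general hn p hp Ω hΩcv F J hJ LJ hLJ hJLip h hconv Lh hLh hhLip cnp cpm hcnp1 hcpm1 hcnp
    hcpm ε σ α θ Δstar hε hσ hα0 hα1 hθ0 x τ Δ A d ρ hrun hFconv hmono xstar hxstarΩ hxstarmin D₀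
    hD₀ hΔstarD₀ T
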